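/- Let A, B be n×n positive definite matrices, let a, b ≥ 0, and let 0 ≤ c ≤ 2ab. Then the eigenvalue vector of a²A + b²B + c(A ♮ B) is weakly majorized by the eigenvalue vector of W_{a,b}(A,B) = a²A + b²B + ab((AB)^{1/2} + (BA)^{1/2}). -/

import Mathlib

/-!
Put `X = A⁻¹ # B`, so that `X A X = B` and `A ♮ B = Y A Y` with `Y = X ^ (1/2)`. Since `A X` and
`X A` have positive spectrum and square to `A B` and `B A`, uniqueness of principal square roots
gives `(AB) ^ (1/2) = A X` and `(BA) ^ (1/2) = X A`, hence `W_{a,b}(A, B) = N A N` with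
`N = a + b X`. The left-hand side is `Φ A` for the positive map `Φ P = a² P + b² X P X + c Y P Y`,
which is self-adjoint for the trace pairing.

If `P` is the spectral projection of `Φ A` onto `k` of its eigenvalues, then
`tr (P Φ A) = tr (Φ P · A) = tr (Θ · N A N)` with `Θ = N⁻¹ (Φ P) N⁻¹`. As
`Φ 1 = N² - (2ab - c) X ≤ N²`, the matrix `Θ` satisfies `0 ≤ Θ ≤ 1` and `tr Θ ≤ tr P = k`, and
Ky Fan's maximum principle bounds `tr (Θ W)` by the sum of the `k` largest eigenvalues of `W`.
-/

open Matrix ComplexOrder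

namespace Heron

variable {n : ℕ}

def WeakMaj {n : ℕ} (x y : Fin n → ℝ) : Prop :=
  ∀ s : Finset (Fin n), ∃ t : Finset (Fin n),
    t.card = s.card ∧ ∑ i ∈ s, x i ≤ ∑ i ∈ t, y i

def Maj {n : ℕ} (x y : Fin n → ℝ) : Prop :=
  WeakMaj x y ∧ ∑ i, x i = ∑ i, y i

lemma sandwich_posSemidef {S T : Matrix (Fin n) (Fin n) ℂ} (hS : S.IsHermitian)
    (hT : T.PosSemidef) : (S * T * S).PosSemidef := by
  have h := hT.mul_mul_conjTranspose_same S
  rwa [hS.eq] at h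

/-- `Matrix.PosSemidef.sqrt` was removed from Mathlib; restored with its old definition. -/
noncomputable def _root_.Matrix.PosSemidef.sqrt {m 𝕜 : Type*} [Fintype m] [RCLike 𝕜]
    [DecidableEq m] {A : Matrix m m 𝕜} (hA : A.PosSemidef) : Matrix m m 𝕜 :=
  hA.1.eigenvectorUnitary.1 * diagonal ((↑) ∘ (√·) ∘ hA.1.eigenvalues) *
    (star hA.1.eigenvectorUnitary : Matrix m m 𝕜)

lemma _root_.Matrix.PosSemidef.posSemidef_sqrt {m 𝕜 : Type*} [Fintype m] [RCLike 𝕜]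
    [DecidableEq m] {A : Matrix m m 𝕜} (hA : A.PosSemidef) : hA.sqrt.PosSemidef := by
  apply PosSemidef.mul_mul_conjTranspose_same
  refine posSemidef_diagonal_iff.mpr fun i ↦ ?_
  rw [Function.comp_apply, RCLike.nonneg_iff]
  constructor
  · simp only [Function.comp_apply, RCLike.ofReal_re]
    exact Real.sqrt_nonneg _
  · simp only [Function.comp_apply, RCLike.ofReal_im]

noncomputable def geomMean {A B : Matrix (Fin n) (Fin n) ℂ}
    (hA : A.PosDef) (hB : B.PosDef) : Matrix (Fin n) (Fin n) ℂ :=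
  hA.posSemidef.sqrt *
    (sandwich_posSemidef hA.posSemidef.posSemidef_sqrt.isHermitian.inv
        hB.posSemidef).sqrt *
    hA.posSemidef.sqrt

lemma geomMean_posSemidef {A B : Matrix (Fin n) (Fin n) ℂ}
    (hA : A.PosDef) (hB : B.PosDef) : (geomMean hA hB).PosSemidef :=
  sandwich_posSemidef hA.posSemidef.posSemidef_sqrt.isHermitian
    (Matrix.PosSemidef.posSemidef_sqrt _)

noncomputable def specMean {A B : Matrix (Fin n) (Fin n) ℂ}
    (hA : A.PosDef) (hB : B.PosDef) : Matrix (Fin n) (Fin n) ℂ :=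
  (geomMean_posSemidef hA.inv hB).sqrt * A * (geomMean_posSemidef hA.inv hB).sqrt

def HasPosSpectrum (M : Matrix (Fin n) (Fin n) ℂ) : Prop :=
  ∀ z ∈ spectrum ℂ M, 0 < z.re ∧ z.im = 0

def IsPrincipalSqrt (M S : Matrix (Fin n) (Fin n) ℂ) : Prop :=
  S * S = M ∧ HasPosSpectrum S

noncomputable def absMat (Y : Matrix (Fin n) (Fin n) ℂ) : Matrix (Fin n) (Fin n) ℂ :=
  (Matrix.posSemidef_conjTranspose_mul_self Y).sqrt

noncomputable def posPart (H : Matrix (Fin n) (Fin n) ℂ) : Matrix (Fin n) (Fin n) ℂ :=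
  ((1 : ℂ) / 2) • (absMat H + H)


end Heron

theorem Complex.zero_le_ofReal_sq (a : ℝ) : 0 ≤ (a : ℂ) ^ 2 := by
  rw [← Complex.ofReal_pow]
  exact Complex.zero_le_real.mpr (sq_nonneg a)

namespace Polynomial

theorem aeval_mul_eq_mul_aeval {R A : Type*} [CommSemiring R] [Semiring A]
    [Algebra R A] {a b x : A} (h : a * x = x * b) (p : R[X]) :
    aeval a p * x = x * aeval b p := by
  induction p using Polynomial.induction_on' with
  | add p q hp hq => simp only [map_add, add_mul, mul_add, hp, hq]
  | monomial k r =>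
    have hk : a ^ k * x = x * b ^ k := (SemiconjBy.pow_right h.symm k).symm
    simp only [aeval_monomial, mul_assoc, hk, ← mul_assoc _ x, Algebra.commutes]

end Polynomial

namespace Finset

variable {ι : Type*} [Fintype ι]

theorem exists_card_eq_forall_notMem_le (μ : ι → ℝ) {k : ℕ} (hk : k ≤ Fintype.card ι) :
    ∃ t : Finset ι, t.card = k ∧ ∀ i ∈ t, ∀ j ∉ t, μ j ≤ μ i := by
  classical
  obtain ⟨t, ht, hmax⟩ := (univ.powersetCard k).exists_max_image (fun t => ∑ i ∈ t, μ i)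
    (powersetCard_nonempty.mpr (by simpa using hk))
  rw [mem_powersetCard] at ht
  refine ⟨t, ht.2, fun i hi j hj => not_lt.mp fun hlt => ?_⟩
  have hj' : j ∉ t.erase i := fun h => hj (mem_of_mem_erase h)
  have hcard : (insert j (t.erase i)).card = k := by
    rw [card_insert_of_notMem hj', card_erase_of_mem hi, ← ht.2]
    exact Nat.sub_add_cancel (card_pos.mpr ⟨i, hi⟩)
  have hswap := hmax _ (mem_powersetCard.mpr ⟨subset_univ _, hcard⟩)
  rw [sum_insert hj', sum_erase_eq_sub hi] at hswap
  linarith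

theorem exists_card_eq_sum_mul_le_sum {μ d : ι → ℝ} (hμ : ∀ j, 0 ≤ μ j)
    (hd : ∀ j, d j ∈ Set.Icc 0 1) {k : ℕ} (hk : k ≤ Fintype.card ι) (hdk : ∑ j, d j ≤ k) :
    ∃ t : Finset ι, t.card = k ∧ ∑ j, μ j * d j ≤ ∑ i ∈ t, μ i := by
  classical
  obtain ⟨t, htk, htop⟩ := exists_card_eq_forall_notMem_le μ hk
  obtain ⟨m, hm, hin, hout⟩ : ∃ m, 0 ≤ m ∧ (∀ i ∈ t, m ≤ μ i) ∧ ∀ j ∉ t, μ j ≤ m := by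
    rcases t.eq_empty_or_nonempty with rfl | ht
    · exact ⟨∑ j, μ j, sum_nonneg fun j _ => hμ j, by simp,
        fun j _ => single_le_sum (fun j _ => hμ j) (mem_univ j)⟩
    · obtain ⟨i₀, hi₀, hmin⟩ := t.exists_min_image μ ht
      exact ⟨μ i₀, hμ i₀, hmin, htop i₀ hi₀⟩
  set e : ι → ℝ := fun j => if j ∈ t then 1 else 0
  have hterm : ∀ j, (μ j - m) * (d j - e j) ≤ 0 := by
    intro j
    by_cases hj : j ∈ t
    · simp only [e, if_pos hj]
      exact mul_nonpos_of_nonneg_of_nonpos (by linarith [hin j hj]) (by linarith [(hd j).2])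
    · simp only [e, if_neg hj, sub_zero]
      exact mul_nonpos_of_nonpos_of_nonneg (by linarith [hout j hj]) (hd j).1
  have he : ∑ j, e j = k := by simp [e, htk]
  have hμe : ∑ j, μ j * e j = ∑ i ∈ t, μ i := by simp [e]
  refine ⟨t, htk, ?_⟩
  calc ∑ j, μ j * d j
      = ∑ j, μ j * e j + ∑ j, (μ j - m) * (d j - e j) + m * (∑ j, d j - ∑ j, e j) := by
        rw [mul_sub, mul_sum, mul_sum, ← sum_add_distrib, ← sum_sub_distrib,
          ← sum_add_distrib]
        exact sum_congr rfl fun j _ => by ring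
    _ ≤ ∑ i ∈ t, μ i := by
        have := sum_nonpos fun j (_ : j ∈ univ) => hterm j
        nlinarith

end Finset

namespace Matrix

open Unitary

variable {ι : Type*} [Fintype ι] [DecidableEq ι]

theorem nonsing_inv_mul_mul_self_mul_nonsing_inv {R : Type*} [CommRing R] {M : Matrix ι ι R}
    (hM : IsUnit M.det) : M⁻¹ * (M * M) * M⁻¹ = 1 := by
  rw [← Matrix.mul_assoc, nonsing_inv_mul M hM, Matrix.one_mul, mul_nonsing_inv M hM]

theorem commute_nonsing_inv_right {R : Type*} [CommRing R] {M N : Matrix ι ι R}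
    (h : Commute M N) : Commute M N⁻¹ := by
  by_cases hN : IsUnit N.det
  · obtain ⟨u, rfl⟩ := (isUnit_iff_isUnit_det N).mpr hN
    rw [← coe_units_inv]
    exact h.units_inv_right
  · rw [nonsing_inv_apply_not_isUnit N hN]
    exact Commute.zero_right M

theorem eq_zero_of_mul_eq_mul_of_disjoint_spectrum {K : Type*} [Field K] [IsAlgClosed K]
    {M N X : Matrix ι ι K} (h : M * X = X * N) (hMN : Disjoint (spectrum K M) (spectrum K N)) :
    X = 0 := by
  nontriviality Matrix ι ι K
  -- Cayley–Hamilton kills `M.charpoly` at `M`; by spectral mapping it is invertible at `N`.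
  have hunit : IsUnit (Polynomial.aeval N M.charpoly) := by
    rw [← spectrum.zero_notMem_iff K, spectrum.map_polynomial_aeval_of_nonempty _ _
      (spectrum.nonempty_of_isAlgClosed_of_finiteDimensional K N)]
    rintro ⟨z, hzN, hz0⟩
    exact hMN.ne_of_mem (mem_spectrum_of_isRoot_charpoly hz0) hzN rfl
  have hX := Polynomial.aeval_mul_eq_mul_aeval h M.charpoly
  rw [aeval_self_charpoly, zero_mul] at hX
  exact hunit.mul_left_eq_zero.mp hX.symm

theorem eq_of_mul_self_eq_mul_self_of_re_pos {S₁ S₂ : Matrix ι ι ℂ} (hsq : S₁ * S₁ = S₂ * S₂)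
    (h₁ : ∀ z ∈ spectrum ℂ S₁, 0 < z.re) (h₂ : ∀ z ∈ spectrum ℂ S₂, 0 < z.re) : S₁ = S₂ := by
  rw [← sub_eq_zero]
  refine eq_zero_of_mul_eq_mul_of_disjoint_spectrum (M := S₁) (N := -S₂) ?_ ?_
  · simp only [Matrix.mul_sub, Matrix.sub_mul, Matrix.mul_neg, hsq]
    abel
  · rw [← spectrum.neg_eq, Set.disjoint_left]
    intro z hz hz'
    linarith [h₁ z hz, h₂ _ (Set.mem_neg.mp hz'), Complex.neg_re z]

theorem PosDef.pos_of_mem_spectrum_mul {P Q : Matrix ι ι ℂ} (hP : P.PosDef) (hQ : Q.PosDef)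
    {z : ℂ} (hz : z ∈ spectrum ℂ (P * Q)) : 0 < z := by
  rw [← spectrum_toLin', ← Module.End.hasEigenvalue_iff_mem_spectrum] at hz
  obtain ⟨v, hv, hv0⟩ := hz.exists_hasEigenvector
  rw [Module.End.mem_eigenspace_iff, toLin'_apply] at hv
  have hQv : Q *ᵥ v ≠ 0 := fun h => hv0 (eq_zero_of_mulVec_eq_zero hQ.det_pos.ne' h)
  have key : star (Q *ᵥ v) ⬝ᵥ (P *ᵥ (Q *ᵥ v)) = z * (star v ⬝ᵥ (Q *ᵥ v)) := by
    rw [mulVec_mulVec, hv, dotProduct_smul, smul_eq_mul, star_mulVec, ← dotProduct_mulVec,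
      hQ.1.eq]
  have h := hP.dotProduct_mulVec_pos hQv
  rw [key] at h
  exact pos_of_mul_pos_left h (hQ.dotProduct_mulVec_pos hv0).le

variable {𝕜 : Type*} [RCLike 𝕜]

theorem PosSemidef.sqrt_mul_self {A : Matrix ι ι 𝕜} (hA : A.PosSemidef) :
    hA.sqrt * hA.sqrt = A := by
  set U : Matrix ι ι 𝕜 := (hA.1.eigenvectorUnitary : Matrix ι ι 𝕜)
  have hU : star U * U = 1 := coe_star_mul_self _
  conv_rhs => rw [hA.1.spectral_theorem, conjStarAlgAut_apply]
  calc hA.sqrt * hA.sqrt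
      = U * (diagonal ((↑) ∘ (√·) ∘ hA.1.eigenvalues) * (star U * U) *
          diagonal ((↑) ∘ (√·) ∘ hA.1.eigenvalues)) * star U := by
        simp only [PosSemidef.sqrt, U, Matrix.mul_assoc]
    _ = _ := by
      rw [hU, Matrix.mul_one, diagonal_mul_diagonal]
      congr 3
      funext i
      simp [← RCLike.ofReal_mul, Real.mul_self_sqrt (hA.eigenvalues_nonneg i)]

theorem PosSemidef.trace_mul_nonneg {P Q : Matrix ι ι 𝕜} (hP : P.PosSemidef)
    (hQ : Q.PosSemidef) : 0 ≤ (P * Q).trace := by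
  have h := (hQ.mul_mul_conjTranspose_same hP.sqrt).trace_nonneg
  rwa [hP.posSemidef_sqrt.isHermitian.eq, trace_mul_cycle, hP.sqrt_mul_self] at h

theorem trace_conjStarAlgAut (u : unitary (Matrix ι ι 𝕜)) (M : Matrix ι ι 𝕜) :
    (conjStarAlgAut 𝕜 _ u M).trace = M.trace := by
  rw [conjStarAlgAut_apply, trace_mul_cycle, coe_star_mul_self, Matrix.one_mul]

theorem PosSemidef.conjStarAlgAut {M : Matrix ι ι 𝕜} (hM : M.PosSemidef)
    (u : unitary (Matrix ι ι 𝕜)) : (conjStarAlgAut 𝕜 _ u M).PosSemidef := by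
  simpa only [conjStarAlgAut_apply, star_eq_conjTranspose] using
    hM.mul_mul_conjTranspose_same (u : Matrix ι ι 𝕜)

theorem trace_mul_diagonal (M : Matrix ι ι 𝕜) (d : ι → 𝕜) :
    (M * diagonal d).trace = ∑ i, M i i * d i := by
  simp [trace, mul_diagonal]

theorem IsHermitian.exists_trace_mul_eq_sum_eigenvalues {H : Matrix ι ι 𝕜}
    (hH : H.IsHermitian) (s : Finset ι) :
    ∃ P : Matrix ι ι 𝕜, P.PosSemidef ∧ (1 - P).PosSemidef ∧ P.trace = s.card ∧
      (P * H).trace = ∑ i ∈ s, (hH.eigenvalues i : 𝕜) := by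
  set d : ι → 𝕜 := fun i => if i ∈ s then 1 else 0
  have hd : (diagonal d).PosSemidef :=
    PosSemidef.diagonal fun i => by by_cases h : i ∈ s <;> simp [d, h]
  have hd₁ : (1 - diagonal d).PosSemidef := by
    rw [← diagonal_one, diagonal_sub]
    exact PosSemidef.diagonal fun i => by by_cases h : i ∈ s <;> simp [d, h]
  set u := hH.eigenvectorUnitary
  refine ⟨conjStarAlgAut 𝕜 _ u (diagonal d), hd.conjStarAlgAut u, ?_, ?_, ?_⟩
  · simpa only [map_sub, map_one] using hd₁.conjStarAlgAut u
  · rw [trace_conjStarAlgAut]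
    simp [d]
  · conv_lhs => rw [hH.spectral_theorem]
    rw [← map_mul, trace_conjStarAlgAut, diagonal_mul_diagonal, trace_diagonal]
    simp [d]

theorem PosSemidef.exists_card_eq_re_trace_mul_le_sum_eigenvalues {W Θ : Matrix ι ι 𝕜}
    (hW : W.PosSemidef) (hΘ₀ : Θ.PosSemidef) (hΘ₁ : (1 - Θ).PosSemidef) {k : ℕ}
    (hk : k ≤ Fintype.card ι) (hΘk : RCLike.re Θ.trace ≤ k) :
    ∃ t : Finset ι, t.card = k ∧ RCLike.re (Θ * W).trace ≤ ∑ i ∈ t, hW.1.eigenvalues i := by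
  set u := star hW.1.eigenvectorUnitary
  set D := Unitary.conjStarAlgAut 𝕜 _ u Θ
  have hD : ∀ j, RCLike.re (D j j) ∈ Set.Icc 0 1 := by
    intro j
    have h₀ := (RCLike.nonneg_iff.mp ((hΘ₀.conjStarAlgAut u).diag_nonneg (i := j))).1
    have h₁ := (RCLike.nonneg_iff.mp ((hΘ₁.conjStarAlgAut u).diag_nonneg (i := j))).1
    simp only [map_sub, map_one, sub_apply, one_apply_eq, RCLike.one_re] at h₁
    exact ⟨h₀, by linarith⟩
  have hDk : ∑ j, RCLike.re (D j j) ≤ k := by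
    rw [← map_sum]
    rwa [← trace_conjStarAlgAut u] at hΘk
  obtain ⟨t, htk, ht⟩ := Finset.exists_card_eq_sum_mul_le_sum hW.eigenvalues_nonneg hD hk hDk
  refine ⟨t, htk, le_of_eq_of_le ?_ ht⟩
  rw [← trace_conjStarAlgAut u, map_mul, hW.1.conjStarAlgAut_star_eigenvectorUnitary,
    trace_mul_diagonal, map_sum]
  simp [D, mul_comm]

end Matrix

namespace Heron

variable {n : ℕ}

theorem geomMean_mul_inv_mul_geomMean {A B : Matrix (Fin n) (Fin n) ℂ} (hA : A.PosDef)
    (hB : B.PosDef) : geomMean hA hB * A⁻¹ * geomMean hA hB = B := by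
  set s := hA.posSemidef.sqrt
  set R := (sandwich_posSemidef hA.posSemidef.posSemidef_sqrt.isHermitian.inv
    hB.posSemidef).sqrt
  have hRR : R * R = s⁻¹ * B * s⁻¹ := PosSemidef.sqrt_mul_self _
  have hss : s * s = A := hA.posSemidef.sqrt_mul_self
  have hs : IsUnit s.det := by
    rw [isUnit_iff_ne_zero, Ne, ← mul_self_eq_zero, ← det_mul, hss]
    exact hA.det_pos.ne'
  have hAinv : A⁻¹ = s⁻¹ * s⁻¹ := by rw [← hss, Matrix.mul_inv_rev]
  calc geomMean hA hB * A⁻¹ * geomMean hA hB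
      = s * R * (s * s⁻¹) * (s⁻¹ * s) * R * s := by
        simp only [geomMean, hAinv, Matrix.mul_assoc]; rfl
    _ = s * (R * R) * s := by
        rw [mul_nonsing_inv s hs, nonsing_inv_mul s hs]
        simp only [Matrix.mul_one, Matrix.mul_assoc]
    _ = (s * s⁻¹) * B * (s⁻¹ * s) := by rw [hRR]; simp only [Matrix.mul_assoc]
    _ = B := by rw [mul_nonsing_inv s hs, nonsing_inv_mul s hs, Matrix.one_mul, Matrix.mul_one]

theorem geomMean_inv_mul_mul_geomMean_inv {A B : Matrix (Fin n) (Fin n) ℂ} (hA : A.PosDef)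
    (hB : B.PosDef) : geomMean hA.inv hB * A * geomMean hA.inv hB = B := by
  simpa only [nonsing_inv_nonsing_inv A ((isUnit_iff_isUnit_det A).mp hA.isUnit)] using
    geomMean_mul_inv_mul_geomMean hA.inv hB

theorem geomMean_inv_posDef {A B : Matrix (Fin n) (Fin n) ℂ} (hA : A.PosDef) (hB : B.PosDef) :
    (geomMean hA.inv hB).PosDef := by
  refine (geomMean_posSemidef hA.inv hB).posDef_iff_det_ne_zero.mpr fun h => hB.det_pos.ne' ?_
  rw [← geomMean_inv_mul_mul_geomMean_inv hA hB, det_mul, det_mul, h, zero_mul, zero_mul]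

theorem IsPrincipalSqrt.eq_mul_geomMean_inv {A B S : Matrix (Fin n) (Fin n) ℂ}
    (hA : A.PosDef) (hB : B.PosDef) (hS : IsPrincipalSqrt (A * B) S) :
    S = A * geomMean hA.inv hB := by
  refine eq_of_mul_self_eq_mul_self_of_re_pos ?_ (fun z hz => (hS.2 z hz).1)
    fun z hz => (Complex.lt_def.mp (hA.pos_of_mem_spectrum_mul (geomMean_inv_posDef hA hB) hz)).1
  rw [hS.1, Matrix.mul_assoc, ← Matrix.mul_assoc _ A,
    geomMean_inv_mul_mul_geomMean_inv hA hB]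

theorem IsPrincipalSqrt.eq_geomMean_inv_mul {A B T : Matrix (Fin n) (Fin n) ℂ}
    (hA : A.PosDef) (hB : B.PosDef) (hT : IsPrincipalSqrt (B * A) T) :
    T = geomMean hA.inv hB * A := by
  refine eq_of_mul_self_eq_mul_self_of_re_pos ?_ (fun z hz => (hT.2 z hz).1)
    fun z hz => (Complex.lt_def.mp ((geomMean_inv_posDef hA hB).pos_of_mem_spectrum_mul hA hz)).1
  rw [hT.1, ← Matrix.mul_assoc, geomMean_inv_mul_mul_geomMean_inv hA hB]

def heronMap (a b c : ℝ) (X Y P : Matrix (Fin n) (Fin n) ℂ) : Matrix (Fin n) (Fin n) ℂ :=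
  ((a : ℂ) ^ 2) • P + ((b : ℂ) ^ 2) • (X * P * X) + (c : ℂ) • (Y * P * Y)

def heronFactor (a b : ℝ) (X : Matrix (Fin n) (Fin n) ℂ) : Matrix (Fin n) (Fin n) ℂ :=
  (a : ℂ) • 1 + (b : ℂ) • X

noncomputable def heronContraction (a b c : ℝ) (X Y P : Matrix (Fin n) (Fin n) ℂ) :
    Matrix (Fin n) (Fin n) ℂ :=
  (heronFactor a b X)⁻¹ * heronMap a b c X Y P * (heronFactor a b X)⁻¹

variable {a b c : ℝ} {X Y : Matrix (Fin n) (Fin n) ℂ}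

theorem heronMap_posSemidef (hc : 0 ≤ c) (hX : X.IsHermitian) (hY : Y.IsHermitian)
    {P : Matrix (Fin n) (Fin n) ℂ} (hP : P.PosSemidef) : (heronMap a b c X Y P).PosSemidef :=
  ((hP.smul (Complex.zero_le_ofReal_sq a)).add
    ((sandwich_posSemidef hX hP).smul (Complex.zero_le_ofReal_sq b))).add
    ((sandwich_posSemidef hY hP).smul (Complex.zero_le_real.mpr hc))

theorem heronMap_sub (P Q : Matrix (Fin n) (Fin n) ℂ) :
    heronMap a b c X Y P - heronMap a b c X Y Q = heronMap a b c X Y (P - Q) := by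
  simp only [heronMap, Matrix.mul_sub, Matrix.sub_mul, smul_sub]
  abel

theorem trace_mul_heronMap (P Q : Matrix (Fin n) (Fin n) ℂ) :
    (P * heronMap a b c X Y Q).trace = (heronMap a b c X Y P * Q).trace := by
  simp only [heronMap, Matrix.mul_add, Matrix.add_mul, mul_smul_comm, smul_mul_assoc,
    trace_add, trace_smul, ← Matrix.mul_assoc]
  rw [trace_mul_cycle (P * X) Q X, trace_mul_cycle (P * Y) Q Y]
  simp only [Matrix.mul_assoc]

theorem heronMap_conj {K : Matrix (Fin n) (Fin n) ℂ} (hXK : Commute X K) (hYK : Commute Y K)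
    (P : Matrix (Fin n) (Fin n) ℂ) :
    heronMap a b c X Y (K * P * K) = K * heronMap a b c X Y P * K := by
  simp only [heronMap, Matrix.mul_add, Matrix.add_mul, mul_smul_comm, smul_mul_assoc,
    ← Matrix.mul_assoc, hXK.eq, hYK.eq]
  simp only [Matrix.mul_assoc, hXK.eq, hYK.eq]

theorem heronFactor_isHermitian (hX : X.IsHermitian) : (heronFactor a b X).IsHermitian := by
  simp [heronFactor, IsHermitian, conjTranspose_add, conjTranspose_smul, hX.eq]

theorem heronFactor_posDef (hX : X.PosSemidef) (ha : 0 < a) (hb : 0 ≤ b) :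
    (heronFactor a b X).PosDef :=
  (PosDef.one.smul (Complex.zero_lt_real.mpr ha)).add_posSemidef
    (hX.smul (Complex.zero_le_real.mpr hb))

theorem commute_heronFactor {M : Matrix (Fin n) (Fin n) ℂ} (h : Commute M X) :
    Commute M (heronFactor a b X) :=
  ((Commute.one_right M).smul_right _).add_right (h.smul_right _)

theorem heronFactor_mul_self_sub_heronMap_one (hYX : Y * Y = X) :
    heronFactor a b X * heronFactor a b X - heronMap a b c X Y 1 =
      ((2 * a * b - c : ℝ) : ℂ) • X := by
  simp only [heronFactor, heronMap, Matrix.mul_add, Matrix.add_mul, mul_smul_comm,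
    smul_mul_assoc, Matrix.mul_one, Matrix.one_mul, hYX]
  push_cast
  module

theorem heronFactor_mul_self_sub_heronMap_one_posSemidef (hX : X.PosSemidef) (hYX : Y * Y = X)
    (hc : c ≤ 2 * a * b) :
    (heronFactor a b X * heronFactor a b X - heronMap a b c X Y 1).PosSemidef := by
  rw [heronFactor_mul_self_sub_heronMap_one hYX]
  exact hX.smul (Complex.zero_le_real.mpr (by linarith))

theorem heronContraction_posSemidef (hc₀ : 0 ≤ c) (hX : X.IsHermitian) (hY : Y.IsHermitian)
    {P : Matrix (Fin n) (Fin n) ℂ} (hP : P.PosSemidef) :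
    (heronContraction a b c X Y P).PosSemidef :=
  sandwich_posSemidef (heronFactor_isHermitian hX).inv (heronMap_posSemidef hc₀ hX hY hP)

theorem one_sub_heronContraction_posSemidef (hX : X.PosSemidef) (hY : Y.IsHermitian)
    (hYX : Y * Y = X) (hc₀ : 0 ≤ c) (hc : c ≤ 2 * a * b)
    (hN : IsUnit (heronFactor a b X).det) {P : Matrix (Fin n) (Fin n) ℂ}
    (hP : (1 - P).PosSemidef) : (1 - heronContraction a b c X Y P).PosSemidef := by
  set N := heronFactor a b X
  have h : 1 - heronContraction a b c X Y P =
      N⁻¹ * ((N * N - heronMap a b c X Y 1) + heronMap a b c X Y (1 - P)) * N⁻¹ := by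
    rw [← heronMap_sub, sub_add_sub_cancel, Matrix.mul_sub, Matrix.sub_mul,
      nonsing_inv_mul_mul_self_mul_nonsing_inv hN]
    rfl
  rw [h]
  exact sandwich_posSemidef (heronFactor_isHermitian hX.1).inv
    ((heronFactor_mul_self_sub_heronMap_one_posSemidef hX hYX hc).add
      (heronMap_posSemidef hc₀ hX.1 hY hP))

theorem re_trace_heronContraction_le (hX : X.PosSemidef) (hYX : Y * Y = X)
    (hc : c ≤ 2 * a * b) (hN : IsUnit (heronFactor a b X).det)
    {P : Matrix (Fin n) (Fin n) ℂ} (hP : P.PosSemidef) :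
    (heronContraction a b c X Y P).trace.re ≤ P.trace.re := by
  set N := heronFactor a b X
  have hK : N⁻¹.IsHermitian := (heronFactor_isHermitian hX.1).inv
  have hXK : Commute X N⁻¹ := commute_nonsing_inv_right (commute_heronFactor (.refl X))
  have hYK : Commute Y N⁻¹ := commute_nonsing_inv_right <| commute_heronFactor <| by
    rw [← hYX]
    exact (Commute.refl Y).mul_right (Commute.refl Y)
  have htr : (heronContraction a b c X Y P).trace =
      (P * (N⁻¹ * heronMap a b c X Y 1 * N⁻¹)).trace := by
    rw [heronContraction, trace_mul_cycle, trace_mul_comm, ← trace_mul_heronMap,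
      ← heronMap_conj hXK hYK, Matrix.mul_one]
  have h := hP.trace_mul_nonneg <|
    sandwich_posSemidef hK (heronFactor_mul_self_sub_heronMap_one_posSemidef hX hYX hc)
  rw [Matrix.mul_sub, Matrix.sub_mul, nonsing_inv_mul_mul_self_mul_nonsing_inv hN,
    Matrix.mul_sub, trace_sub, Matrix.mul_one, ← htr] at h
  simpa using (Complex.le_def.mp h).1

theorem trace_mul_heronMap_eq_trace_heronContraction_mul (hN : IsUnit (heronFactor a b X).det)
    (P A : Matrix (Fin n) (Fin n) ℂ) :
    (P * heronMap a b c X Y A).trace =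
      (heronContraction a b c X Y P * (heronFactor a b X * A * heronFactor a b X)).trace := by
  set N := heronFactor a b X
  calc (P * heronMap a b c X Y A).trace
      = (heronMap a b c X Y P * ((N⁻¹ * N) * A * (N * N⁻¹))).trace := by
        rw [trace_mul_heronMap, nonsing_inv_mul N hN, mul_nonsing_inv N hN, Matrix.one_mul,
          Matrix.mul_one]
    _ = (N⁻¹ * (heronMap a b c X Y P * N⁻¹ * (N * A * N))).trace := by
        rw [trace_mul_comm N⁻¹]
        simp only [Matrix.mul_assoc]
    _ = _ := by simp only [heronContraction, Matrix.mul_assoc]; rfl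

theorem heronMap_geomMean_inv {A B : Matrix (Fin n) (Fin n) ℂ} (hA : A.PosDef) (hB : B.PosDef)
    (a b c : ℝ) :
    heronMap a b c (geomMean hA.inv hB) (geomMean_posSemidef hA.inv hB).sqrt A =
      ((a : ℂ) ^ 2) • A + ((b : ℂ) ^ 2) • B + (c : ℂ) • specMean hA hB := by
  rw [heronMap, geomMean_inv_mul_mul_geomMean_inv hA hB]
  rfl

theorem heronFactor_mul_mul_heronFactor_geomMean_inv {A B S T : Matrix (Fin n) (Fin n) ℂ}
    (hA : A.PosDef) (hB : B.PosDef) (hS : IsPrincipalSqrt (A * B) S)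
    (hT : IsPrincipalSqrt (B * A) T) (a b : ℝ) :
    heronFactor a b (geomMean hA.inv hB) * A * heronFactor a b (geomMean hA.inv hB) =
      ((a : ℂ) ^ 2) • A + ((b : ℂ) ^ 2) • B + ((a : ℂ) * b) • (S + T) := by
  simp only [heronFactor, Matrix.add_mul, Matrix.mul_add, smul_mul_assoc, mul_smul_comm,
    Matrix.one_mul, Matrix.mul_one, hS.eq_mul_geomMean_inv hA hB, hT.eq_geomMean_inv_mul hA hB,
    geomMean_inv_mul_mul_geomMean_inv hA hB]
  module

/-- the sharp spectral Heron–Wasserstein comparison: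
`a²A + b²B + c(A ♮ B) ≺_w W_{a,b}(A,B)` for `0 ≤ c ≤ 2ab`. -/
theorem spectral_heron_wasserstein {n : ℕ} (A B S T : Matrix (Fin n) (Fin n) ℂ)
    (hA : A.PosDef) (hB : B.PosDef)
    (a b c : ℝ) (ha : 0 ≤ a) (hb : 0 ≤ b) (hc0 : 0 ≤ c) (hc : c ≤ 2 * a * b)
    (hS : IsPrincipalSqrt (A * B) S) (hT : IsPrincipalSqrt (B * A) T)
    (hH : (((a : ℂ) ^ 2) • A + ((b : ℂ) ^ 2) • B
        + (c : ℂ) • specMean hA hB).IsHermitian)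
    (hW : (((a : ℂ) ^ 2) • A + ((b : ℂ) ^ 2) • B
        + ((a : ℂ) * b) • (S + T)).IsHermitian) :
    WeakMaj hH.eigenvalues hW.eigenvalues := by
  rcases ha.eq_or_lt with rfl | ha
  · obtain rfl : c = 0 := le_antisymm (by simpa using hc) hc0
    rw [(hH.eigenvalues_eq_eigenvalues_iff hW).mpr (by congr 1; simp)]
    exact fun s => ⟨s, rfl, le_rfl⟩
  have hX := (geomMean_inv_posDef hA hB).posSemidef
  have hY := (geomMean_posSemidef hA.inv hB).posSemidef_sqrt.1
  have hYX := (geomMean_posSemidef hA.inv hB).sqrt_mul_self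
  have hN := heronFactor_posDef hX ha hb
  have hNdet := (isUnit_iff_isUnit_det _).mp hN.isUnit
  have hWpsd : (((a : ℂ) ^ 2) • A + ((b : ℂ) ^ 2) • B + ((a : ℂ) * b) • (S + T)).PosSemidef := by
    rw [← heronFactor_mul_mul_heronFactor_geomMean_inv hA hB hS hT]
    exact sandwich_posSemidef hN.1 hA.posSemidef
  intro s
  obtain ⟨P, hP₀, hP₁, hPk, hPH⟩ := hH.exists_trace_mul_eq_sum_eigenvalues s
  obtain ⟨t, htk, ht⟩ := hWpsd.exists_card_eq_re_trace_mul_le_sum_eigenvalues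
    (heronContraction_posSemidef hc0 hX.1 hY hP₀)
    (one_sub_heronContraction_posSemidef hX hY hYX hc0 hc hNdet hP₁)
    (by simpa using s.card_le_univ)
    (by simpa [hPk] using re_trace_heronContraction_le hX hYX hc hNdet hP₀)
  refine ⟨t, htk, le_of_eq_of_le ?_ ht⟩
  rw [← heronFactor_mul_mul_heronFactor_geomMean_inv hA hB hS hT,
    ← trace_mul_heronMap_eq_trace_heronContraction_mul hNdet, heronMap_geomMean_inv hA hB, hPH]
  simp

end Heron
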